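/- For every M ≥ 1, pairwise distinct μ₁,…,μ_M ∈ D, and λ ∈ D distinct from all μ_j, the following commutation relation holds: v⁺(λ) B_M(μ₁,…,μ_M) = (−1)^M B_M(μ₁,…,μ_M) v⁺(λ) + 2 Σ_{j=1}^{M} (−1)^j ((X⁺(λ) − X⁺(μ_j))/(λ − μ_j)) B_{M−1}^{(j)}(μ₁,…,μ_M). -/

import Mathlib

/-- The creation operators B_M of the osp(1|2) Gaudin model, defined by the
recurrence B_M(μ₁,…,μ_M) = v⁺(μ₁)B_{M−1}(μ₂,…,μ_M)
+ 2X⁺(μ₁)Σ_{j=2}^{M} ((−1)^j/(μ₁−μ_j)) B_{M−2}^{(j)}(μ₂,…,μ_M). -/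
noncomputable def Bop {A : Type*} [Ring A] [Algebra ℂ A] (X v : ℂ → A) : List ℂ → A
  | [] => 1
  | μ :: rest => v μ * Bop X v rest +
      (2:ℂ) • (X μ * ∑ i : Fin rest.length,
        (((-1:ℂ)^(i:ℕ) / (μ - rest.get i)) • Bop X v (rest.eraseIdx i)))
termination_by l => l.length
decreasing_by
  all_goals simp [List.length_eraseIdx] <;> omega

/-- Remove the entries at (0-based) positions `i` and `j` from the list `l`. -/
def erase2 (l : List ℂ) (i j : ℕ) : List ℂ := (l.eraseIdx (max i j)).eraseIdx (min i j)

/-- Θ(i − j) for the Heaviside function Θ (Θ(x) = 1 for x > 0, Θ(x) = 0 for x ≤ 0). -/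
def theta (i j : ℕ) : ℕ := if j < i then 1 else 0

/-!
Induction on the length of the list. Expanding `B(μ :: t) = v(μ) B(t) + 2 X(μ) Σᵢ …`, the factor
`v(λ)` passes `X(μ)` freely and `v(μ)` up to the anticommutator `-2 (X(λ) - X(μ)) / (λ - μ)`;
the induction hypothesis then moves it through `B(t)` and every `B(t⁽ⁱ⁾)`. Expanding the exchange
term of `μ :: t` in the same way produces a double sum over two removed positions, weighted by
poles at `λ` and at `μ`; swapping the order of summation in such a double sum only flips its
sign, and the two sides agree.
-/

section AltPoleSum
variable {K M : Type*} [Field K] [AddCommGroup M] [Module K M]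

/-- `Σⱼ (-1)ʲ / (z - lⱼ) • F lⱼ l⁽ʲ⁾` with 0-based `j`, where `l⁽ʲ⁾` omits the entry `lⱼ`. The
inner sum of `Bop` and the sum in the commutation relation are both of this shape. -/
def altPoleSum (z : K) (F : K → List K → M) (l : List K) : M :=
  ∑ j : Fin l.length, ((-1 : K) ^ (j : ℕ) / (z - l.get j)) • F (l.get j) (l.eraseIdx j)

@[simp]
theorem altPoleSum_nil (z : K) (F : K → List K → M) : altPoleSum z F [] = 0 := by
  simp [altPoleSum]

theorem altPoleSum_cons (z a : K) (F : K → List K → M) (s : List K) :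
    altPoleSum z F (a :: s) = (z - a)⁻¹ • F a s - altPoleSum z (fun x l => F x (a :: l)) s := by
  simp [altPoleSum, Fin.sum_univ_succ, pow_succ, neg_div, sub_eq_add_neg]

theorem altPoleSum_congr {z : K} {F G : K → List K → M} {l : List K}
    (h : ∀ x l', (x :: l').Perm l → F x l' = G x l') :
    altPoleSum z F l = altPoleSum z G l :=
  Finset.sum_congr rfl fun j _ => congrArg _ (h _ _ (List.getElem_cons_eraseIdx_perm j.isLt))

theorem altPoleSum_sub (z : K) (F G : K → List K → M) (l : List K) :
    altPoleSum z (fun x l' => F x l' - G x l') l = altPoleSum z F l - altPoleSum z G l := by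
  simp [altPoleSum, smul_sub, Finset.sum_sub_distrib]

theorem altPoleSum_add (z : K) (F G : K → List K → M) (l : List K) :
    altPoleSum z (fun x l' => F x l' + G x l') l = altPoleSum z F l + altPoleSum z G l := by
  simp [altPoleSum, smul_add, Finset.sum_add_distrib]

theorem altPoleSum_smul (z c : K) (F : K → List K → M) (l : List K) :
    altPoleSum z (fun x l' => c • F x l') l = c • altPoleSum z F l := by
  simp [altPoleSum, Finset.smul_sum, smul_comm c]

/-- Each ordered pair of distinct positions occurs once on each side, with opposite signs. -/
theorem altPoleSum_altPoleSum_comm (z w : K) (G : K → K → List K → M) (l : List K) :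
    altPoleSum z (fun x l' => altPoleSum w (G x) l') l =
      -altPoleSum w (fun y l' => altPoleSum z (fun x => G x y) l') l := by
  induction l generalizing G with
  | nil => simp
  | cons a s ih =>
    simp only [altPoleSum_cons, altPoleSum_sub, altPoleSum_smul]
    rw [ih fun x y l' => G x y (a :: l')]
    abel

end AltPoleSum

section AltPoleSumMul
variable {K A : Type*} [Field K] [Ring A] [Algebra K A]

theorem mul_altPoleSum (a : A) (z : K) (F : K → List K → A) (l : List K) :
    a * altPoleSum z F l = altPoleSum z (fun x l' => a * F x l') l := by
  simp [altPoleSum, Finset.mul_sum]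

theorem altPoleSum_mul (a : A) (z : K) (F : K → List K → A) (l : List K) :
    altPoleSum z F l * a = altPoleSum z (fun x l' => F x l' * a) l := by
  simp [altPoleSum, Finset.sum_mul]

end AltPoleSumMul

section Bop
variable {A : Type*} [Ring A] [Algebra ℂ A] (X v : ℂ → A)

theorem Bop_cons (μ : ℂ) (t : List ℂ) :
    Bop X v (μ :: t) = v μ * Bop X v t + (2 : ℂ) • (X μ * altPoleSum μ (fun _ => Bop X v) t) := by
  rw [Bop]; rfl

noncomputable def exchangeTerm (lam : ℂ) (l : List ℂ) : A :=
  altPoleSum lam (fun y l' => (X lam - X y) * Bop X v l') l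

theorem exchangeTerm_cons (lam μ : ℂ) (t : List ℂ)
    (hv : ∀ y ∈ t, Commute (X lam - X y) (v μ)) (hX : ∀ y ∈ t, Commute (X lam - X y) (X μ)) :
    exchangeTerm X v lam (μ :: t) =
      (lam - μ)⁻¹ • ((X lam - X μ) * Bop X v t) - v μ * exchangeTerm X v lam t
        + (2 : ℂ) • (X μ * altPoleSum μ (fun _ => exchangeTerm X v lam) t) := by
  have hsummand : ∀ y l, (y :: l).Perm t →
      (X lam - X y) * Bop X v (μ :: l) =
        v μ * ((X lam - X y) * Bop X v l) +
          (2 : ℂ) • (X μ * altPoleSum μ (fun _ l' => (X lam - X y) * Bop X v l') l) := by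
    intro y l hyl
    have hy : y ∈ t := hyl.subset List.mem_cons_self
    rw [Bop_cons, mul_add, ← mul_assoc, (hv y hy).eq, mul_assoc, mul_smul_comm,
      ← mul_assoc (X lam - X y), (hX y hy).eq, mul_assoc, mul_altPoleSum]
  rw [exchangeTerm, altPoleSum_cons, altPoleSum_congr hsummand, altPoleSum_add, altPoleSum_smul,
    ← mul_altPoleSum, ← mul_altPoleSum,
    altPoleSum_altPoleSum_comm lam μ fun y _ l => (X lam - X y) * Bop X v l]
  simp only [exchangeTerm, mul_neg, smul_neg]
  abel

theorem v_mul_Bop_cons {lam μ : ℂ} {t : List ℂ}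
    (hvv : v lam * v μ + v μ * v lam = (-2 / (lam - μ)) • (X lam - X μ))
    (hXv : Commute (X μ) (v lam))
    (hv : ∀ y ∈ t, Commute (X lam - X y) (v μ)) (hX : ∀ y ∈ t, Commute (X lam - X y) (X μ))
    (ih_tail : v lam * Bop X v t =
      (-1 : ℂ) ^ t.length • (Bop X v t * v lam) - (2 : ℂ) • exchangeTerm X v lam t)
    (ih_erase : ∀ y l, (y :: l).Perm t → v lam * Bop X v l =
      (-1 : ℂ) ^ l.length • (Bop X v l * v lam) - (2 : ℂ) • exchangeTerm X v lam l) :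
    v lam * Bop X v (μ :: t) =
      (-1 : ℂ) ^ (μ :: t).length • (Bop X v (μ :: t) * v lam)
        - (2 : ℂ) • exchangeTerm X v lam (μ :: t) := by
  have h_erase : altPoleSum μ (fun _ l => v lam * Bop X v l) t =
      -(-1 : ℂ) ^ t.length • (altPoleSum μ (fun _ => Bop X v) t * v lam)
        - (2 : ℂ) • altPoleSum μ (fun _ => exchangeTerm X v lam) t := by
    have ih_erase' : ∀ y l, (y :: l).Perm t → v lam * Bop X v l =
        -(-1 : ℂ) ^ t.length • (Bop X v l * v lam) - (2 : ℂ) • exchangeTerm X v lam l := by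
      intro y l hyl
      rw [ih_erase y l hyl, ← hyl.length_eq, List.length_cons, pow_succ, mul_neg_one, neg_neg]
    rw [altPoleSum_congr ih_erase', altPoleSum_sub, altPoleSum_smul, altPoleSum_smul, altPoleSum_mul]
  have hvv' : v lam * v μ = (-2 / (lam - μ)) • (X lam - X μ) - v μ * v lam :=
    eq_sub_of_add_eq hvv
  rw [exchangeTerm_cons X v lam μ t hv hX, Bop_cons, mul_add, ← mul_assoc, hvv', mul_smul_comm,
    ← mul_assoc, ← hXv.eq, mul_assoc, mul_altPoleSum, h_erase, List.length_cons, pow_succ]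
  simp only [sub_mul, add_mul, mul_sub, smul_mul_assoc, mul_smul_comm, mul_assoc, ih_tail]
  module

theorem v_mul_Bop {D : Set ℂ} (hXX : ∀ l ∈ D, ∀ m ∈ D, l ≠ m → Commute (X l) (X m))
    (hXv : ∀ l ∈ D, ∀ m ∈ D, l ≠ m → Commute (X l) (v m))
    (hvv : ∀ l ∈ D, ∀ m ∈ D, l ≠ m → v l * v m + v m * v l = (-2 / (l - m)) • (X l - X m))
    {lam : ℂ} {l : List ℂ} (hnd : (lam :: l).Nodup) (hD : ∀ ν ∈ lam :: l, ν ∈ D) :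
    v lam * Bop X v l =
      (-1 : ℂ) ^ l.length • (Bop X v l * v lam) - (2 : ℂ) • exchangeTerm X v lam l := by
  match l with
  | [] => simp [Bop, exchangeTerm]
  | μ :: t =>
    have hlam : lam ∈ D := hD lam List.mem_cons_self
    have hμ : μ ∈ D := hD μ (by simp)
    have hlamμ : lam ≠ μ := by simp_all
    have hcomm : ∀ y ∈ t, Commute (X lam - X y) (v μ) ∧ Commute (X lam - X y) (X μ) := by
      intro y hy
      have hyD : y ∈ D := hD y (by simp [hy])
      have hyμ : y ≠ μ := by rintro rfl; simp_all
      exact ⟨(hXv lam hlam μ hμ hlamμ).sub_left (hXv y hyD μ hμ hyμ),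
        (hXX lam hlam μ hμ hlamμ).sub_left (hXX y hyD μ hμ hyμ)⟩
    have hsub : ∀ l', l'.Subperm t → (lam :: l').Subperm (lam :: μ :: t) := fun l' h =>
      (List.subperm_cons lam).2 (h.trans (List.sublist_cons_self μ t).subperm)
    have hnd_of : ∀ l', l'.Subperm t → (lam :: l').Nodup := fun l' h => by
      obtain ⟨k, hk, hks⟩ := hsub l' h
      exact (hnd.sublist hks).perm hk
    refine v_mul_Bop_cons X v (hvv lam hlam μ hμ hlamμ) (hXv μ hμ lam hlam hlamμ.symm)
      (fun y hy => (hcomm y hy).1) (fun y hy => (hcomm y hy).2) ?_ ?_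
    · exact v_mul_Bop hXX hXv hvv (hnd_of t (List.Subperm.refl t))
        (fun ν hν => hD ν ((hsub t (List.Subperm.refl t)).subset hν))
    · intro y l' hperm
      have hl' : l'.Subperm t := (List.sublist_cons_self y l').subperm.trans hperm.subperm
      exact v_mul_Bop hXX hXv hvv (hnd_of l' hl') (fun ν hν => hD ν ((hsub l' hl').subset hν))
termination_by l.length
decreasing_by
  · simp
  · rw [List.length_cons, ← hperm.length_eq, List.length_cons]; omega

end Bop

theorem vp_Bop_commutation_general {A : Type*} [Ring A] [Algebra ℂ A] (D : Set ℂ)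
    (X v : ℂ → A)
    (hXX : ∀ l ∈ D, ∀ m ∈ D, l ≠ m → X l * X m = X m * X l)
    (hXv : ∀ l ∈ D, ∀ m ∈ D, l ≠ m → X l * v m = v m * X l)
    (hvv : ∀ l ∈ D, ∀ m ∈ D, l ≠ m →
      v l * v m + v m * v l = (-2/(l - m)) • (X l - X m))
    (μs : List ℂ)
    (hdist : μs.Pairwise (· ≠ ·)) (hD : ∀ ν ∈ μs, ν ∈ D)
    (lam : ℂ) (hlamD : lam ∈ D) (hlam : ∀ ν ∈ μs, lam ≠ ν) :
    v lam * Bop X v μs =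
      ((-1:ℂ)^μs.length) • (Bop X v μs * v lam) +
      (2:ℂ) • ∑ j : Fin μs.length,
        (((-1:ℂ)^((j:ℕ)+1) / (lam - μs.get j)) •
          ((X lam - X (μs.get j)) * Bop X v (μs.eraseIdx (j:ℕ)))) := by
  have hsum : ∑ j : Fin μs.length, (((-1:ℂ)^((j:ℕ)+1) / (lam - μs.get j)) •
      ((X lam - X (μs.get j)) * Bop X v (μs.eraseIdx (j:ℕ)))) = -exchangeTerm X v lam μs := by
    simp [exchangeTerm, altPoleSum, pow_succ, neg_div]
  rw [hsum, smul_neg, ← sub_eq_add_neg]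
  exact v_mul_Bop X v hXX hXv hvv (List.nodup_cons.2 ⟨fun h => hlam lam h rfl, hdist⟩)
    (by simpa [hlamD] using hD)

/-- commutation relation between v⁺(λ) and the creation operator B_M. -/
theorem vp_Bop_commutation {A : Type*} [Ring A] [Algebra ℂ A] (D : Set ℂ)
    (X v : ℂ → A)
    (hXX : ∀ l ∈ D, ∀ m ∈ D, l ≠ m → X l * X m = X m * X l)
    (hXv : ∀ l ∈ D, ∀ m ∈ D, l ≠ m → X l * v m = v m * X l)
    (hvv : ∀ l ∈ D, ∀ m ∈ D, l ≠ m →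
      v l * v m + v m * v l = (-2/(l - m)) • (X l - X m))
    (μs : List ℂ) (hM : μs ≠ [])
    (hdist : μs.Pairwise (· ≠ ·)) (hD : ∀ ν ∈ μs, ν ∈ D)
    (lam : ℂ) (hlamD : lam ∈ D) (hlam : ∀ ν ∈ μs, lam ≠ ν) :
    v lam * Bop X v μs =
      ((-1:ℂ)^μs.length) • (Bop X v μs * v lam) +
      (2:ℂ) • ∑ j : Fin μs.length,
        (((-1:ℂ)^((j:ℕ)+1) / (lam - μs.get j)) •
          ((X lam - X (μs.get j)) * Bop X v (μs.eraseIdx (j:ℕ)))) :=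
  vp_Bop_commutation_general D X v hXX hXv hvv μs hdist hD lam hlamD hlam
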